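/- arXiv:2403.01037 — 2 statements merged into one kernel-verified Lean document; each statement's English description precedes it below -/
import Mathlib

section
/- Let m, n ≥ 3. Every interior vertex of the grid graph P_m □ P_n (i.e., every vertex (i,j) with 1 < i < m and 1 < j < n) has nonpositive node resistance curvature: p_{(i,j)} ≤ 0. -/
/-!
Every edge of a grid has effective resistance at least `1/2`. Indeed `P_m □ P_n` is a subgraph of
the discrete torus `C_k □ C_k` for every `k ≥ m, n`, so by Rayleigh monotonicity its resistances
dominate those of the torus. The torus is `4`-regular and its automorphisms act transitively on
edges, so Foster's theorem `∑_{u ~ v} ω_{u,v} = 2 (|V| - 1)` gives every torus edge the resistance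
`1/2 - 1/(2k²)`, which tends to `1/2`. An interior vertex has four neighbours, hence
`∑_{y ~ x} ω_{x,y} ≥ 2` and `p_x ≤ 0`.

The pseudo-inverse of a connected Laplacian is computed as `(L + J)⁻¹ - J`, where `J` is the
orthogonal projection onto the constant vectors.
-/

open Classical Matrix

/-- The four Penrose conditions characterizing the Moore–Penrose pseudoinverse
of a real square matrix. -/
def IsMoorePenroseInverse {V : Type*} [Fintype V] [DecidableEq V]
    (L P : Matrix V V ℝ) : Prop :=
  L * P * L = L ∧ P * L * P = P ∧ (L * P)ᵀ = L * P ∧ (P * L)ᵀ = P * L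

/-- The Moore–Penrose pseudoinverse of a real square matrix. -/
noncomputable def pinv {V : Type*} [Fintype V] [DecidableEq V]
    (L : Matrix V V ℝ) : Matrix V V ℝ :=
  if h : ∃ P, IsMoorePenroseInverse L P then h.choose else 0

/-- Effective resistance between `x` and `y` computed from a (weighted) Laplacian `L`. -/
noncomputable def effResM {V : Type*} [Fintype V] [DecidableEq V]
    (L : Matrix V V ℝ) (x y : V) : ℝ :=
  pinv L x x + pinv L y y - 2 * pinv L x y

/-- Effective resistance between vertices `x` and `y` of a simple graph `G`. -/
noncomputable def effRes {V : Type*} [Fintype V] [DecidableEq V]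
    (G : SimpleGraph V) (x y : V) : ℝ :=
  effResM (G.lapMatrix ℝ) x y

/-- The node resistance curvature `p_x = 1 - (1/2) ∑_{y ~ x} ω_{x,y}`. -/
noncomputable def curv {V : Type*} [Fintype V] [DecidableEq V]
    (G : SimpleGraph V) (x : V) : ℝ :=
  1 - (1/2) * ∑ y : V, if G.Adj x y then effRes G x y else 0

/-- The grid graph `P_m □ P_n` (vertex `(i,j)` of the paper corresponds to
`(⟨i-1⟩, ⟨j-1⟩) : Fin m × Fin n`). -/
def grid (m n : ℕ) : SimpleGraph (Fin m × Fin n) :=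
  (SimpleGraph.pathGraph m).boxProd (SimpleGraph.pathGraph n)

open SimpleGraph

section MoorePenrose

variable {V : Type*} [Fintype V] [DecidableEq V]

theorem IsMoorePenroseInverse.unique {L P Q : Matrix V V ℝ} (hP : IsMoorePenroseInverse L P)
    (hQ : IsMoorePenroseInverse L Q) : P = Q := by
  obtain ⟨hLPL, hPLP, hLP, hPL⟩ := hP
  obtain ⟨hLQL, hQLQ, hLQ, hQL⟩ := hQ
  have hP_eq : P = P * L * Q :=
    calc P = P * (L * P)ᵀ := by rw [hLP, ← mul_assoc, hPLP]
      _ = P * Pᵀ * (L * Q * L)ᵀ := by rw [hLQL, transpose_mul, mul_assoc]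
      _ = P * (L * P)ᵀ * (L * Q)ᵀ := by simp only [transpose_mul, mul_assoc]
      _ = P * L * Q := by rw [hLP, hLQ]; simp only [← mul_assoc]; rw [hPLP]
  have hQ_eq : Q = P * L * Q :=
    calc Q = (Q * L)ᵀ * Q := by rw [hQL, hQLQ]
      _ = (L * P * L)ᵀ * Qᵀ * Q := by rw [hLPL, transpose_mul, mul_assoc]
      _ = (P * L)ᵀ * (Q * L)ᵀ * Q := by simp only [transpose_mul, mul_assoc]
      _ = P * L * Q := by rw [hPL, hQL, mul_assoc, hQLQ]
  rw [hP_eq, ← hQ_eq]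

theorem pinv_eq_of_isMoorePenroseInverse {L P : Matrix V V ℝ} (h : IsMoorePenroseInverse L P) :
    pinv L = P := by
  have hex : ∃ P, IsMoorePenroseInverse L P := ⟨P, h⟩
  rw [pinv, dif_pos hex]
  exact hex.choose_spec.unique h

end MoorePenrose

section ComplementaryProjection

variable {V : Type*} [Fintype V] [DecidableEq V] {L J : Matrix V V ℝ}

theorem mul_inv_add_eq (hJL : J * L = 0) (hJJ : J * J = J) (hQ : IsUnit (L + J).det) :
    J * (L + J)⁻¹ = J :=
  calc J * (L + J)⁻¹ = J * (L + J) * (L + J)⁻¹ := by rw [mul_add, hJL, hJJ, zero_add]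
    _ = J := by rw [mul_assoc, mul_nonsing_inv _ hQ, mul_one]

theorem inv_add_mul_eq (hLJ : L * J = 0) (hJJ : J * J = J) (hQ : IsUnit (L + J).det) :
    (L + J)⁻¹ * J = J :=
  calc (L + J)⁻¹ * J = (L + J)⁻¹ * ((L + J) * J) := by rw [add_mul, hLJ, hJJ, zero_add]
    _ = J := by rw [← mul_assoc, nonsing_inv_mul _ hQ, one_mul]

theorem mul_inv_add_sub_eq (hLJ : L * J = 0) (hJL : J * L = 0) (hJJ : J * J = J)
    (hQ : IsUnit (L + J).det) : L * ((L + J)⁻¹ - J) = 1 - J :=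
  calc L * ((L + J)⁻¹ - J) = (L + J) * (L + J)⁻¹ - J * (L + J)⁻¹ := by
        rw [mul_sub, hLJ, sub_zero, add_mul, add_sub_cancel_right]
    _ = 1 - J := by rw [mul_nonsing_inv _ hQ, mul_inv_add_eq hJL hJJ hQ]

theorem inv_add_sub_mul_eq (hLJ : L * J = 0) (hJL : J * L = 0) (hJJ : J * J = J)
    (hQ : IsUnit (L + J).det) : ((L + J)⁻¹ - J) * L = 1 - J :=
  calc ((L + J)⁻¹ - J) * L = (L + J)⁻¹ * (L + J) - (L + J)⁻¹ * J := by
        rw [sub_mul, hJL, sub_zero, mul_add, add_sub_cancel_right]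
    _ = 1 - J := by rw [nonsing_inv_mul _ hQ, inv_add_mul_eq hLJ hJJ hQ]

theorem isMoorePenroseInverse_inv_add_sub (hLJ : L * J = 0) (hJL : J * L = 0)
    (hJJ : J * J = J) (hJt : Jᵀ = J) (hQ : IsUnit (L + J).det) :
    IsMoorePenroseInverse L ((L + J)⁻¹ - J) := by
  have hLP := mul_inv_add_sub_eq hLJ hJL hJJ hQ
  have hPL := inv_add_sub_mul_eq hLJ hJL hJJ hQ
  have hJP : J * ((L + J)⁻¹ - J) = 0 := by rw [mul_sub, mul_inv_add_eq hJL hJJ hQ, hJJ, sub_self]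
  refine ⟨?_, ?_, ?_, ?_⟩
  · rw [hLP, sub_mul, one_mul, hJL, sub_zero]
  · rw [hPL, sub_mul, one_mul, hJP, sub_zero]
  · rw [hLP, transpose_sub, transpose_one, hJt]
  · rw [hPL, transpose_sub, transpose_one, hJt]

end ComplementaryProjection

section LaplacianPinv

variable (V : Type*) [Fintype V]

noncomputable def avgMatrix : Matrix V V ℝ := Matrix.of fun _ _ => (Fintype.card V : ℝ)⁻¹

variable {V}

theorem transpose_avgMatrix : (avgMatrix V)ᵀ = avgMatrix V := rfl

theorem avgMatrix_mulVec (x : V → ℝ) (i : V) :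
    (avgMatrix V *ᵥ x) i = (Fintype.card V : ℝ)⁻¹ * ∑ j, x j := by
  simp [avgMatrix, mulVec, dotProduct, Finset.mul_sum]

theorem avgMatrix_mulVec_of_forall_eq [Nonempty V] {x : V → ℝ} (hx : ∀ i j, x i = x j) :
    avgMatrix V *ᵥ x = x := by
  ext i
  rw [avgMatrix_mulVec, Finset.sum_congr rfl fun j _ => hx j i, Finset.sum_const,
    Finset.card_univ, nsmul_eq_mul, ← mul_assoc, inv_mul_cancel₀ (by positivity), one_mul]

theorem avgMatrix_mul_self [Nonempty V] : avgMatrix V * avgMatrix V = avgMatrix V := by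
  ext i j
  simp only [mul_apply, avgMatrix, of_apply, Finset.sum_const, Finset.card_univ, nsmul_eq_mul]
  rw [← mul_assoc, mul_inv_cancel₀ (by positivity), one_mul]

theorem trace_avgMatrix [Nonempty V] : (avgMatrix V).trace = 1 := by
  simp only [trace, diag, avgMatrix, of_apply, Finset.sum_const, Finset.card_univ, nsmul_eq_mul]
  exact mul_inv_cancel₀ (by positivity)

variable [DecidableEq V] (G : SimpleGraph V)

theorem lapMatrix_mul_avgMatrix : G.lapMatrix ℝ * avgMatrix V = 0 := by
  ext i j
  have hrow := congrFun (G.lapMatrix_mulVec_const_eq_zero (R := ℝ)) i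
  simp only [mulVec, dotProduct, mul_one, Pi.zero_apply] at hrow
  simp [mul_apply, avgMatrix, ← Finset.sum_mul, hrow]

theorem avgMatrix_mul_lapMatrix : avgMatrix V * G.lapMatrix ℝ = 0 := by
  rw [← (G.isSymm_lapMatrix (R := ℝ)).eq, ← transpose_avgMatrix, ← transpose_mul,
    lapMatrix_mul_avgMatrix, transpose_zero]

theorem isUnit_det_lapMatrix_add_avgMatrix [Nonempty V] (hG : G.Preconnected) :
    IsUnit (G.lapMatrix ℝ + avgMatrix V).det := by
  rw [← isUnit_iff_isUnit_det, ← mulVec_injective_iff_isUnit, ← coe_mulVecLin,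
    injective_iff_map_eq_zero]
  intro x hx
  rw [mulVecLin_apply] at hx
  -- `(L + J) x = 0` forces `J x = 0` and `L x = 0`: `x` is constant with mean zero.
  have hJx : avgMatrix V *ᵥ x = 0 := by
    simpa [mulVec_mulVec, mul_add, avgMatrix_mul_lapMatrix, avgMatrix_mul_self] using
      congrArg (avgMatrix V *ᵥ ·) hx
  have hLx : G.lapMatrix ℝ *ᵥ x = 0 := by simpa [add_mulVec, hJx] using hx
  rw [← hJx, avgMatrix_mulVec_of_forall_eq fun i j =>
    (G.lapMatrix_mulVec_eq_zero_iff_forall_reachable.mp hLx) i j (hG i j)]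

theorem pinv_lapMatrix [Nonempty V] (hG : G.Preconnected) :
    pinv (G.lapMatrix ℝ) = (G.lapMatrix ℝ + avgMatrix V)⁻¹ - avgMatrix V :=
  pinv_eq_of_isMoorePenroseInverse <| isMoorePenroseInverse_inv_add_sub
    (lapMatrix_mul_avgMatrix G) (avgMatrix_mul_lapMatrix G) avgMatrix_mul_self
    transpose_avgMatrix (isUnit_det_lapMatrix_add_avgMatrix G hG)

theorem lapMatrix_mul_pinv [Nonempty V] (hG : G.Preconnected) :
    G.lapMatrix ℝ * pinv (G.lapMatrix ℝ) = 1 - avgMatrix V := by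
  rw [pinv_lapMatrix G hG]
  exact mul_inv_add_sub_eq (lapMatrix_mul_avgMatrix G) (avgMatrix_mul_lapMatrix G)
    avgMatrix_mul_self (isUnit_det_lapMatrix_add_avgMatrix G hG)

theorem transpose_pinv_lapMatrix [Nonempty V] (hG : G.Preconnected) :
    (pinv (G.lapMatrix ℝ))ᵀ = pinv (G.lapMatrix ℝ) := by
  rw [pinv_lapMatrix G hG, transpose_sub, transpose_nonsing_inv, transpose_add,
    (G.isSymm_lapMatrix (R := ℝ)).eq, transpose_avgMatrix]

end LaplacianPinv

section Resistance

variable {V : Type*} [Fintype V] [DecidableEq V] (G : SimpleGraph V)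

noncomputable def energy (f : V → ℝ) : ℝ := f ⬝ᵥ (G.lapMatrix ℝ *ᵥ f)

/-- The potential of the unit current flowing from `x` to `y`. -/
noncomputable def potential (x y : V) : V → ℝ :=
  pinv (G.lapMatrix ℝ) *ᵥ (Pi.single x 1 - Pi.single y 1)

theorem energy_nonneg (f : V → ℝ) : 0 ≤ energy G f := by
  simpa [energy] using (posSemidef_lapMatrix ℝ G).dotProduct_mulVec_nonneg f

theorem energy_eq_sum (f : V → ℝ) :
    energy G f = (∑ i, ∑ j, if G.Adj i j then (f i - f j) ^ 2 else 0) / 2 := by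
  rw [energy, ← toLinearMap₂'_apply', lapMatrix_toLinearMap₂']

theorem dotProduct_lapMatrix_mulVec_comm (f g : V → ℝ) :
    f ⬝ᵥ (G.lapMatrix ℝ *ᵥ g) = g ⬝ᵥ (G.lapMatrix ℝ *ᵥ f) := by
  rw [dotProduct_mulVec, ← mulVec_transpose, (G.isSymm_lapMatrix (R := ℝ)).eq, dotProduct_comm]

theorem dotProduct_lapMatrix_mulVec_potential (hG : G.Preconnected) (f : V → ℝ) (x y : V) :
    f ⬝ᵥ (G.lapMatrix ℝ *ᵥ potential G x y) = f x - f y := by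
  have : Nonempty V := ⟨x⟩
  have hJ : avgMatrix V *ᵥ (Pi.single x 1 - Pi.single y 1) = 0 := by
    ext i
    simp [avgMatrix_mulVec, Finset.sum_sub_distrib]
  rw [potential, mulVec_mulVec, lapMatrix_mul_pinv G hG, sub_mulVec, one_mulVec, hJ, sub_zero,
    dotProduct_sub, dotProduct_single, dotProduct_single, mul_one, mul_one]

theorem pinv_lapMatrix_comm (hG : G.Preconnected) (x y : V) :
    pinv (G.lapMatrix ℝ) x y = pinv (G.lapMatrix ℝ) y x := by
  have : Nonempty V := ⟨x⟩
  rw [← transpose_apply (pinv _), transpose_pinv_lapMatrix G hG]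

theorem potential_sub_potential (hG : G.Preconnected) (x y : V) :
    potential G x y x - potential G x y y = effRes G x y := by
  simp only [potential, mulVec, dotProduct_sub, dotProduct_single, mul_one, effRes, effResM,
    pinv_lapMatrix_comm G hG y x]
  ring

theorem energy_potential (hG : G.Preconnected) (x y : V) :
    energy G (potential G x y) = effRes G x y := by
  rw [energy, dotProduct_lapMatrix_mulVec_potential G hG, potential_sub_potential G hG]

/-- Dirichlet's principle: the potential minimises `E(f) - 2 (f x - f y)`. -/
theorem two_mul_sub_energy_le_effRes (hG : G.Preconnected) (f : V → ℝ) (x y : V) :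
    2 * (f x - f y) - energy G f ≤ effRes G x y := by
  set g := potential G x y
  have h := energy_nonneg G (f - g)
  simp only [energy, mulVec_sub, dotProduct_sub, sub_dotProduct] at h
  rw [dotProduct_lapMatrix_mulVec_comm G g f, dotProduct_lapMatrix_mulVec_potential G hG] at h
  have hg := energy_potential G hG x y
  rw [energy] at hg
  rw [energy]
  linarith

end Resistance

section Rayleigh

variable {V W : Type*} [Fintype V] [DecidableEq V] [Fintype W] [DecidableEq W]
  {G : SimpleGraph V} {H : SimpleGraph W}

theorem energy_comp_le_of_injective (ι : H →g G) (hι : Function.Injective ι) (f : V → ℝ) :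
    energy H (f ∘ ι) ≤ energy G f := by
  set F : V × V → ℝ := fun q => if G.Adj q.1 q.2 then (f q.1 - f q.2) ^ 2 else 0
  have hF : ∀ q, 0 ≤ F q := fun q => by dsimp only [F]; split_ifs <;> positivity
  have hιι : Function.Injective (Prod.map ι ι) := hι.prodMap hι
  rw [energy_eq_sum, energy_eq_sum, ← Fintype.sum_prod_type', ← Fintype.sum_prod_type']
  gcongr ?_ / 2
  calc ∑ p : W × W, (if H.Adj p.1 p.2 then ((f ∘ ι) p.1 - (f ∘ ι) p.2) ^ 2 else 0)
      ≤ ∑ p : W × W, F (Prod.map ι ι p) := by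
        gcongr with p
        by_cases hp : H.Adj p.1 p.2
        · simp [F, hp, ι.map_adj hp]
        · simpa [hp] using hF _
    _ = ∑ q ∈ Finset.univ.map ⟨_, hιι⟩, F q := by rw [Finset.sum_map]; rfl
    _ ≤ ∑ q, F q := Finset.sum_le_univ_sum_of_nonneg hF

/-- Rayleigh's monotonicity law. -/
theorem effRes_le_of_injective (hH : H.Preconnected) (hG : G.Preconnected) (ι : H →g G)
    (hι : Function.Injective ι) (x y : W) : effRes G (ι x) (ι y) ≤ effRes H x y := by
  have hDirichlet := two_mul_sub_energy_le_effRes H hH (potential G (ι x) (ι y) ∘ ι) x y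
  have hEnergy := energy_comp_le_of_injective ι hι (potential G (ι x) (ι y))
  rw [energy_potential G hG] at hEnergy
  have hDrop := potential_sub_potential G hG (ι x) (ι y)
  simp only [Function.comp_apply] at hDirichlet
  linarith

theorem effRes_comm (hG : G.Preconnected) (x y : V) : effRes G x y = effRes G y x := by
  simp only [effRes, effResM, pinv_lapMatrix_comm G hG y x]
  ring

theorem effRes_iso (σ : G ≃g H) (hG : G.Preconnected) (x y : V) :
    effRes H (σ x) (σ y) = effRes G x y := by
  have hH := σ.preconnected_iff.mp hG
  refine le_antisymm (effRes_le_of_injective hG hH σ.toHom σ.injective x y) ?_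
  simpa using effRes_le_of_injective hH hG σ.symm.toHom σ.symm.injective (σ x) (σ y)

end Rayleigh

section Foster

variable {V : Type*} [Fintype V] (G : SimpleGraph V)

theorem sum_adj_mul_diag (P : Matrix V V ℝ) :
    ∑ u, ∑ v, (if G.Adj u v then P u u else 0) = ∑ u, (G.degree u : ℝ) * P u u := by
  refine Finset.sum_congr rfl fun u _ => ?_
  rw [degree_eq_sum_if_adj, Finset.sum_mul]
  simp only [ite_mul, one_mul, zero_mul]

theorem trace_lapMatrix_mul [DecidableEq V] (P : Matrix V V ℝ) :
    (G.lapMatrix ℝ * P).trace =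
      ∑ u, (G.degree u : ℝ) * P u u - ∑ u, ∑ v, (if G.Adj u v then P v u else 0) := by
  rw [lapMatrix, sub_mul, trace_sub]
  congr 1
  · simp [trace, degMatrix]
  · simp [trace, mul_apply, adjMatrix_apply]

/-- Foster's theorem. -/
theorem sum_adj_effRes [DecidableEq V] [Nonempty V] (hG : G.Preconnected) :
    ∑ u, ∑ v, (if G.Adj u v then effRes G u v else 0) = 2 * (Fintype.card V - 1) := by
  set P := pinv (G.lapMatrix ℝ)
  have hP : ∀ u v, P u v = P v u := pinv_lapMatrix_comm G hG
  have htrace : (G.lapMatrix ℝ * P).trace = Fintype.card V - 1 := by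
    rw [lapMatrix_mul_pinv G hG, trace_sub, trace_one, trace_avgMatrix]
  have hswap : ∑ u, ∑ v, (if G.Adj u v then P v v else 0) =
      ∑ u, ∑ v, (if G.Adj u v then P u u else 0) := by
    rw [Finset.sum_comm]
    simp only [G.adj_comm]
  calc ∑ u, ∑ v, (if G.Adj u v then effRes G u v else 0)
      = ∑ u, ∑ v, (if G.Adj u v then P u u else 0) + ∑ u, ∑ v, (if G.Adj u v then P v v else 0)
          - 2 * ∑ u, ∑ v, (if G.Adj u v then P v u else 0) := by
        simp only [Finset.mul_sum, ← Finset.sum_add_distrib, ← Finset.sum_sub_distrib]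
        refine Finset.sum_congr rfl fun u _ => Finset.sum_congr rfl fun v _ => ?_
        split_ifs
        · simp only [effRes, effResM, hP v u]
          ring
        · simp
    _ = 2 * (G.lapMatrix ℝ * P).trace := by
        rw [hswap, sum_adj_mul_diag, trace_lapMatrix_mul]
        ring
    _ = 2 * (Fintype.card V - 1) := by rw [htrace]

end Foster

theorem foster_of_isRegularOfDegree {V : Type*} [Fintype V] [DecidableEq V] [Nonempty V]
    {G : SimpleGraph V} (hG : G.Preconnected) {d : ℕ} (hd : G.IsRegularOfDegree d) {r : ℝ}
    (hr : ∀ u v, G.Adj u v → effRes G u v = r) :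
    d * Fintype.card V * r = 2 * (Fintype.card V - 1) := by
  rw [← sum_adj_effRes G hG]
  have hrow : ∀ u, ∑ v, (if G.Adj u v then effRes G u v else 0) = d * r := fun u => by
    rw [← hd.degree_eq u, degree_eq_sum_if_adj, Finset.sum_mul]
    exact Finset.sum_congr rfl fun v _ => by split_ifs with h <;> simp [h, hr u v]
  simp only [hrow, Finset.sum_const, Finset.card_univ, nsmul_eq_mul]
  ring

def torus (k : ℕ) : SimpleGraph (Fin k × Fin k) := cycleGraph k □ cycleGraph k

theorem torus_preconnected (k : ℕ) : (torus k).Preconnected :=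
  cycleGraph_preconnected.boxProd cycleGraph_preconnected

theorem torus_isRegularOfDegree (n : ℕ) : (torus (n + 3)).IsRegularOfDegree 4 := fun v => by
  rw [torus, degree_boxProd, cycleGraph_degree_three_le, cycleGraph_degree_three_le]

theorem cycleGraph_adj_add_right {n : ℕ} {u v d : Fin (n + 1)} :
    (cycleGraph (n + 1)).Adj (u + d) (v + d) ↔ (cycleGraph (n + 1)).Adj u v := by
  rw [cycleGraph_eq_circulantGraph]
  exact circulantGraph_adj_translate

theorem effRes_torus_add_right {n : ℕ} (u v d : Fin (n + 1) × Fin (n + 1)) :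
    effRes (torus (n + 1)) (u + d) (v + d) = effRes (torus (n + 1)) u v :=
  effRes_iso (G := torus (n + 1)) ⟨Equiv.addRight d, by
    simp [torus, boxProd_adj, cycleGraph_adj_add_right]⟩ (torus_preconnected _) u v

theorem effRes_torus_swap {k : ℕ} (u v : Fin k × Fin k) :
    effRes (torus k) u.swap v.swap = effRes (torus k) u v :=
  effRes_iso (G := torus k) (H := torus k) (boxProdComm (G := cycleGraph k) (H := cycleGraph k))
    (torus_preconnected k) u v

theorem effRes_torus_of_adj_left {n : ℕ} {u v : Fin (n + 2) × Fin (n + 2)}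
    (h : (cycleGraph (n + 2)).Adj u.1 v.1) (h2 : u.2 = v.2) :
    effRes (torus (n + 2)) u v = effRes (torus (n + 2)) 0 (1, 0) := by
  have hstep : ∀ a b : Fin (n + 2) × Fin (n + 2), b - a = (1, 0) →
      effRes (torus (n + 2)) a b = effRes (torus (n + 2)) 0 (1, 0) := fun a b hab => by
    simpa [← hab] using effRes_torus_add_right 0 (b - a) a
  rcases cycleGraph_adj.mp h with h1 | h1
  · rw [effRes_comm (torus_preconnected _)]
    exact hstep v u (Prod.ext h1 (by simp [h2]))
  · exact hstep u v (Prod.ext h1 (by simp [h2]))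

theorem effRes_torus_eq_of_adj {n : ℕ} {u v : Fin (n + 2) × Fin (n + 2)}
    (h : (torus (n + 2)).Adj u v) :
    effRes (torus (n + 2)) u v = effRes (torus (n + 2)) 0 (1, 0) := by
  rcases boxProd_adj.mp h with ⟨h1, h2⟩ | ⟨h1, h2⟩
  · exact effRes_torus_of_adj_left h1 h2
  · rw [← effRes_torus_swap]
    exact effRes_torus_of_adj_left h1 h2

theorem effRes_torus_of_adj {n : ℕ} {u v : Fin (n + 3) × Fin (n + 3)}
    (h : (torus (n + 3)).Adj u v) :
    effRes (torus (n + 3)) u v = 1 / 2 - 1 / (2 * ((n + 3 : ℕ) : ℝ) ^ 2) := by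
  have hFoster := foster_of_isRegularOfDegree (torus_preconnected _) (torus_isRegularOfDegree n)
    fun _ _ => effRes_torus_eq_of_adj
  rw [Fintype.card_prod, Fintype.card_fin] at hFoster
  rw [effRes_torus_eq_of_adj h]
  have : (0 : ℝ) < ((n + 3 : ℕ) : ℝ) := by positivity
  field_simp
  push_cast at hFoster ⊢
  linarith

def SimpleGraph.Hom.boxProd {α α' β β' : Type*} {G : SimpleGraph α} {G' : SimpleGraph α'}
    {H : SimpleGraph β} {H' : SimpleGraph β'} (f : G →g G') (g : H →g H') :
    G.boxProd H →g G'.boxProd H' where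
  toFun := Prod.map f g
  map_rel' := by
    rintro ⟨a, b⟩ ⟨a', b'⟩ (⟨h, rfl : b = b'⟩ | ⟨h, rfl : a = a'⟩)
    · exact boxProd_adj_left.mpr (f.map_adj h)
    · exact boxProd_adj_right.mpr (g.map_adj h)

theorem SimpleGraph.Hom.boxProd_injective {α α' β β' : Type*} {G : SimpleGraph α}
    {G' : SimpleGraph α'} {H : SimpleGraph β} {H' : SimpleGraph β'} {f : G →g G'} {g : H →g H'}
    (hf : Function.Injective f) (hg : Function.Injective g) :
    Function.Injective (Hom.boxProd f g) :=
  hf.prodMap hg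

def pathGraphToCycleGraph {m k : ℕ} (h : m ≤ k) : pathGraph m →g cycleGraph k where
  toFun := Fin.castLE h
  map_rel' hab := pathGraph_le_cycleGraph (by simpa [pathGraph_adj] using hab)

theorem one_half_le_effRes_grid {m n : ℕ} {x y : Fin m × Fin n} (h : (grid m n).Adj x y) :
    1 / 2 ≤ effRes (grid m n) x y := by
  have hgrid : (grid m n).Preconnected :=
    (pathGraph_preconnected m).boxProd (pathGraph_preconnected n)
  have hbound : ∀ K ≥ max m n, 1 / 2 - 1 / ((K : ℝ) + 1) ≤ effRes (grid m n) x y := by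
    intro K hK
    have hm : m ≤ K + 3 := by omega
    have hn : n ≤ K + 3 := by omega
    let ι : grid m n →g torus (K + 3) :=
      Hom.boxProd (pathGraphToCycleGraph hm) (pathGraphToCycleGraph hn)
    have hι : Function.Injective ι :=
      Hom.boxProd_injective (Fin.castLE_injective hm) (Fin.castLE_injective hn)
    have hRayleigh := effRes_le_of_injective hgrid (torus_preconnected _) ι hι x y
    rw [effRes_torus_of_adj (ι.map_adj h)] at hRayleigh
    have : 1 / (2 * ((K + 3 : ℕ) : ℝ) ^ 2) ≤ 1 / ((K : ℝ) + 1) := by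
      gcongr
      push_cast
      nlinarith
    linarith
  simpa using le_of_tendsto (tendsto_const_nhds.sub tendsto_one_div_add_atTop_nhds_zero_nat)
    (Filter.eventually_atTop.2 ⟨max m n, hbound⟩)

theorem pathGraph_degree_eq_two {n : ℕ} {i : Fin n} (h0 : 0 < i.val) (h1 : i.val + 1 < n) :
    (pathGraph n).degree i = 2 := by
  have : (pathGraph n).neighborFinset i = {⟨i.val - 1, by omega⟩, ⟨i.val + 1, h1⟩} := by
    ext j
    simp [pathGraph_adj, Fin.ext_iff]
    omega
  rw [← card_neighborFinset_eq_degree, this, Finset.card_pair (by simp [Fin.ext_iff])]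

theorem grid_interior_curv_nonpos_general (m n : ℕ)
    (v : Fin m × Fin n) (h1 : 0 < v.1.val) (h2 : v.1.val < m - 1)
    (h3 : 0 < v.2.val) (h4 : v.2.val < n - 1) :
    curv (grid m n) v ≤ 0 := by
  have hdeg : (grid m n).degree v = 4 := by
    rw [grid, degree_boxProd, pathGraph_degree_eq_two h1 (by omega),
      pathGraph_degree_eq_two h3 (by omega)]
  have hsum : 2 ≤ ∑ y, if (grid m n).Adj v y then effRes (grid m n) v y else 0 :=
    calc (2 : ℝ) = (grid m n).degree v * (1 / 2) := by rw [hdeg]; norm_num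
      _ = ∑ y, if (grid m n).Adj v y then 1 / 2 else 0 := by
        rw [degree_eq_sum_if_adj, Finset.sum_mul]
        simp
      _ ≤ _ := Finset.sum_le_sum fun y _ => by
        split_ifs with h
        exacts [one_half_le_effRes_grid h, le_rfl]
  rw [curv]
  linarith

theorem grid_interior_curv_nonpos (m n : ℕ) (hm : 3 ≤ m) (hn : 3 ≤ n)
    (v : Fin m × Fin n) (h1 : 0 < v.1.val) (h2 : v.1.val < m - 1)
    (h3 : 0 < v.2.val) (h4 : v.2.val < n - 1) :
    curv (grid m n) v ≤ 0 :=
  grid_interior_curv_nonpos_general m n v h1 h2 h3 h4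
end

section
/- Let m, n ≥ 3. Every boundary vertex of the grid graph P_m □ P_n has nonnegative node resistance curvature: p_{(i,j)} ≥ 0 whenever i ∈ {1,m} or j ∈ {1,n}. -/
/-!
By Thomson's principle an effective resistance is at most the energy of any unit flow, and a flow
in a subgraph is a flow in the whole graph. Every boundary vertex of `P_m □ P_n` lies in a copy of
the `3 × 3` grid that contains all of its neighbours, either at a corner or in the middle of a
side. At a corner there are two neighbours, each at resistance at most `1` (the flow along the
edge). In the middle of a side there are three, and the unit potential flows of the `3 × 3` grid
bound their resistances by `17/24`, `17/24` and `7/12`, which add up to `2`. In both cases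
`∑_{y ~ x} ω_{x,y} ≤ 2`, that is `p_x ≥ 0`.
-/

open Classical Matrix

namespace IsMoorePenroseInverse

variable {V : Type*} [Fintype V] [DecidableEq V] {L P Q : Matrix V V ℝ}

theorem unique_s1 (hP : IsMoorePenroseInverse L P) (hQ : IsMoorePenroseInverse L Q) : P = Q := by
  obtain ⟨hP₁, hP₂, hP₃, hP₄⟩ := hP
  obtain ⟨hQ₁, hQ₂, hQ₃, hQ₄⟩ := hQ
  have hLP : L * P = L * Q :=
    calc L * P = (L * Q * L * P)ᵀ := by rw [hQ₁, hP₃]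
      _ = (L * P)ᵀ * (L * Q)ᵀ := by simp only [transpose_mul, Matrix.mul_assoc]
      _ = L * Q := by rw [hP₃, hQ₃, ← Matrix.mul_assoc, hP₁]
  have hPL : P * L = Q * L :=
    calc P * L = (P * (L * Q * L))ᵀ := by rw [hQ₁, hP₄]
      _ = (Q * L)ᵀ * (P * L)ᵀ := by simp only [transpose_mul, Matrix.mul_assoc]
      _ = Q * L := by rw [hP₄, hQ₄, Matrix.mul_assoc, ← Matrix.mul_assoc L, hP₁]
  calc P = P * L * P := hP₂.symm
    _ = Q * L * Q := by rw [hPL, Matrix.mul_assoc, hLP, ← Matrix.mul_assoc]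
    _ = Q := hQ₂

protected theorem transpose (h : IsMoorePenroseInverse L P) : IsMoorePenroseInverse Lᵀ Pᵀ := by
  obtain ⟨h₁, h₂, h₃, h₄⟩ := h
  refine ⟨?_, ?_, ?_, ?_⟩
  · rw [← transpose_mul, ← transpose_mul, ← Matrix.mul_assoc, h₁]
  · rw [← transpose_mul, ← transpose_mul, ← Matrix.mul_assoc, h₂]
  · rw [← transpose_mul, transpose_transpose, h₄]
  · rw [← transpose_mul, transpose_transpose, h₃]

end IsMoorePenroseInverse

section Pinv

variable {V : Type*} [Fintype V] [DecidableEq V] {L P : Matrix V V ℝ}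

theorem isMoorePenroseInverse_pinv (h : ∃ P, IsMoorePenroseInverse L P) :
    IsMoorePenroseInverse L (pinv L) := by
  rw [pinv, dif_pos h]
  exact h.choose_spec

theorem Matrix.IsSymm.pinv (hL : L.IsSymm) (h : ∃ P, IsMoorePenroseInverse L P) :
    (pinv L).IsSymm := by
  have := (isMoorePenroseInverse_pinv h).transpose
  rw [hL.eq] at this
  exact this.unique_s1 (isMoorePenroseInverse_pinv h)

theorem IsMoorePenroseInverse.dotProduct_mulVec_mulVec (h : IsMoorePenroseInverse L P)
    (hP : P.IsSymm) (b : V → ℝ) : (P *ᵥ b) ⬝ᵥ (L *ᵥ (P *ᵥ b)) = b ⬝ᵥ (P *ᵥ b) := by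
  have hb : P *ᵥ b = b ᵥ* P := by rw [← vecMul_transpose, hP.eq]
  calc (P *ᵥ b) ⬝ᵥ (L *ᵥ (P *ᵥ b)) = (b ᵥ* P) ⬝ᵥ (L *ᵥ (P *ᵥ b)) := by rw [← hb]
    _ = b ⬝ᵥ (P *ᵥ b) := by rw [← dotProduct_mulVec, mulVec_mulVec, mulVec_mulVec, h.2.1]

theorem effResM_eq_dotProduct (hP : (pinv L).IsSymm) (x y : V) :
    effResM L x y =
      (Pi.single x 1 - Pi.single y 1 : V → ℝ) ⬝ᵥ (pinv L *ᵥ (Pi.single x 1 - Pi.single y 1)) := by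
  have hxy : pinv L y x = pinv L x y := by rw [← transpose_apply (pinv L), hP.eq]
  simp [effResM, mulVec_sub, sub_dotProduct, single_dotProduct, hxy]
  ring

end Pinv

theorem Finset.sum_sum_mul_sub_of_antisymm {V : Type*} [Fintype V] (θ : V → V → ℝ)
    (hθ : ∀ u v, θ u v = -θ v u) (g : V → ℝ) :
    ∑ u, ∑ v, θ u v * (g u - g v) = 2 * ∑ u, g u * ∑ v, θ u v := by
  have h₁ : ∑ u, ∑ v, θ u v * g u = ∑ u, g u * ∑ v, θ u v := by
    simp only [Finset.mul_sum, mul_comm]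
  have h₂ : ∑ u, ∑ v, θ u v * g v = -∑ u, g u * ∑ v, θ u v := by
    rw [Finset.sum_comm]
    simp only [Finset.mul_sum, ← Finset.sum_neg_distrib]
    refine Finset.sum_congr rfl fun v _ ↦ Finset.sum_congr rfl fun u _ ↦ ?_
    rw [hθ u v]
    ring
  simp only [mul_sub, Finset.sum_sub_distrib, h₁, h₂]
  ring

noncomputable def meanProj (V : Type*) [Fintype V] : Matrix V V ℝ :=
  Matrix.of fun _ _ => (Fintype.card V : ℝ)⁻¹

section MeanProj

variable {V : Type*} [Fintype V]

theorem meanProj_transpose : (meanProj V)ᵀ = meanProj V := rfl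

theorem meanProj_mul_self [Nonempty V] : meanProj V * meanProj V = meanProj V := by
  ext i j
  simp [meanProj, Matrix.mul_apply]

theorem dotProduct_meanProj_mulVec (x : V → ℝ) :
    x ⬝ᵥ (meanProj V *ᵥ x) = (Fintype.card V : ℝ)⁻¹ * (∑ i, x i) ^ 2 := by
  simp only [Matrix.mulVec, dotProduct, meanProj, Matrix.of_apply, ← Finset.mul_sum,
    ← Finset.sum_mul]
  ring

end MeanProj

namespace SimpleGraph

variable {V : Type*} [Fintype V] [DecidableEq V] (G : SimpleGraph V)

theorem lapMatrix_mul_meanProj : G.lapMatrix ℝ * meanProj V = 0 := by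
  ext i j
  have h : ∑ k, G.lapMatrix ℝ i k = 0 := by
    simpa [Matrix.mulVec, dotProduct] using congrFun (G.lapMatrix_mulVec_const_eq_zero (R := ℝ)) i
  simp [meanProj, Matrix.mul_apply, ← Finset.sum_mul, h]

theorem meanProj_mul_lapMatrix : meanProj V * G.lapMatrix ℝ = 0 := by
  rw [← meanProj_transpose, ← G.isSymm_lapMatrix (R := ℝ), ← transpose_mul, lapMatrix_mul_meanProj,
    transpose_zero]

theorem posDef_lapMatrix_add_meanProj (hG : G.Connected) :
    (G.lapMatrix ℝ + meanProj V).PosDef := by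
  rw [Matrix.posDef_iff_dotProduct_mulVec]
  refine ⟨?_, fun x hx ↦ ?_⟩
  · rw [Matrix.IsHermitian, conjTranspose_eq_transpose_of_trivial, transpose_add,
      meanProj_transpose, G.isSymm_lapMatrix (R := ℝ)]
  rw [star_trivial, add_mulVec, dotProduct_add, dotProduct_meanProj_mulVec]
  have hL : 0 ≤ x ⬝ᵥ (G.lapMatrix ℝ *ᵥ x) := by
    simpa using G.posSemidef_lapMatrix ℝ |>.dotProduct_mulVec_nonneg x
  rcases hL.lt_or_eq with hL | hL
  · positivity
  have : Nonempty V := hG.nonempty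
  obtain ⟨i₀⟩ := hG.nonempty
  have hconst : ∀ i, x i = x i₀ := fun i ↦
    (G.lapMatrix_toLinearMap₂'_apply'_eq_zero_iff_forall_reachable x).mp
      (by rw [toLinearMap₂'_apply']; exact hL.symm) i i₀ (hG.preconnected i i₀)
  have hx₀ : x i₀ ≠ 0 := fun h ↦ hx (funext fun i ↦ by rw [hconst i, h, Pi.zero_apply])
  have hcard : (Fintype.card V : ℝ) ≠ 0 := by positivity
  rw [← hL, Finset.sum_congr rfl fun i _ ↦ hconst i]
  simp only [Finset.sum_const, Finset.card_univ, nsmul_eq_mul]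
  positivity

/-- On a connected graph `meanProj V` is the orthogonal projection onto the kernel of the
Laplacian (the constants), so adding it makes the Laplacian invertible. -/
theorem isMoorePenroseInverse_lapMatrix (hG : G.Connected) :
    IsMoorePenroseInverse (G.lapMatrix ℝ) ((G.lapMatrix ℝ + meanProj V)⁻¹ - meanProj V) := by
  have : Nonempty V := hG.nonempty
  set L := G.lapMatrix ℝ
  set J := meanProj V
  set M := L + J
  have hdet : IsUnit M.det := (G.posDef_lapMatrix_add_meanProj hG).isUnit.map Matrix.detMonoidHom
  have hMJ : M * J = J := by rw [add_mul, G.lapMatrix_mul_meanProj, meanProj_mul_self, zero_add]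
  have hJM : J * M = J := by rw [mul_add, G.meanProj_mul_lapMatrix, meanProj_mul_self, zero_add]
  have hM'J : M⁻¹ * J = J := by rw [← hMJ, ← Matrix.mul_assoc, nonsing_inv_mul _ hdet, one_mul, hMJ]
  have hJM' : J * M⁻¹ = J := by rw [← hJM, Matrix.mul_assoc, mul_nonsing_inv _ hdet, mul_one, hJM]
  have hL : L = M - J := (add_sub_cancel_right L J).symm
  have hLP : L * (M⁻¹ - J) = 1 - J := by
    rw [hL, sub_mul, mul_sub, mul_sub, mul_nonsing_inv _ hdet, hMJ, hJM', meanProj_mul_self,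
      sub_self, sub_zero]
  have hPL : (M⁻¹ - J) * L = 1 - J := by
    rw [hL, sub_mul, mul_sub, mul_sub, nonsing_inv_mul _ hdet, hM'J, hJM, meanProj_mul_self,
      sub_self, sub_zero]
  refine ⟨?_, ?_, ?_, ?_⟩
  · rw [hLP, sub_mul, one_mul, G.meanProj_mul_lapMatrix, sub_zero]
  · rw [hPL, sub_mul, one_mul, mul_sub, hJM', meanProj_mul_self, sub_self, sub_zero]
  · rw [hLP, transpose_sub, transpose_one, meanProj_transpose]
  · rw [hPL, transpose_sub, transpose_one, meanProj_transpose]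

/-- Thomson's principle. The factor `1 / 2` is there because every edge is counted in both
directions. -/
theorem effRes_le_flow_energy (hG : G.Connected) {x y : V} (θ : V → V → ℝ)
    (hanti : ∀ u v, θ u v = -θ v u) (hsupp : ∀ u v, ¬G.Adj u v → θ u v = 0)
    (hdiv : ∀ u, ∑ v, θ u v = (if u = x then 1 else 0) - (if u = y then 1 else 0)) :
    effRes G x y ≤ (1 / 2) * ∑ u, ∑ v, θ u v ^ 2 := by
  have hex : ∃ P, IsMoorePenroseInverse (G.lapMatrix ℝ) P :=
    ⟨_, G.isMoorePenroseInverse_lapMatrix hG⟩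
  have hsymm := (G.isSymm_lapMatrix (R := ℝ)).pinv hex
  set b : V → ℝ := Pi.single x 1 - Pi.single y 1
  set g := pinv (G.lapMatrix ℝ) *ᵥ b
  have hb : ∀ u, ∑ v, θ u v = b u := fun u ↦ by simp [b, hdiv, Pi.single_apply]
  have hbg : b ⬝ᵥ g = effRes G x y := (effResM_eq_dotProduct hsymm x y).symm
  have hgLg : g ⬝ᵥ (G.lapMatrix ℝ *ᵥ g) = effRes G x y :=
    ((isMoorePenroseInverse_pinv hex).dotProduct_mulVec_mulVec hsymm b).trans hbg
  -- `g` is the potential of the unit current; pairing `θ` with its gradient `d` and the energy of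
  -- `d` both give `2 ω`, so Cauchy–Schwarz bounds `ω` by the energy of `θ`.
  set d : V → V → ℝ := fun u v ↦ if G.Adj u v then g u - g v else 0
  have hθd : ∑ u, ∑ v, θ u v * d u v = 2 * effRes G x y := by
    have : ∀ u v, θ u v * d u v = θ u v * (g u - g v) := fun u v ↦ by
      by_cases h : G.Adj u v <;> simp [d, h, hsupp]
    simp_rw [this, Finset.sum_sum_mul_sub_of_antisymm θ hanti, hb, ← hbg, dotProduct, mul_comm]
  have hd : ∑ u, ∑ v, d u v ^ 2 = 2 * effRes G x y := by
    have h := G.lapMatrix_toLinearMap₂' ℝ g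
    rw [toLinearMap₂'_apply', hgLg] at h
    have : ∀ u v, d u v ^ 2 = if G.Adj u v then (g u - g v) ^ 2 else 0 := fun u v ↦ by
      by_cases h : G.Adj u v <;> simp [d, h]
    simp_rw [this]
    linarith
  have hCS := Finset.sum_mul_sq_le_sq_mul_sq Finset.univ (fun p : V × V ↦ θ p.1 p.2)
    (fun p ↦ d p.1 p.2)
  simp only [← Finset.univ_product_univ, Finset.sum_product, hθd, hd] at hCS
  have hE : 0 ≤ ∑ u, ∑ v, θ u v ^ 2 := by positivity
  rcases le_or_gt (effRes G x y) 0 with h | h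
  · linarith
  · nlinarith

/-- Rayleigh monotonicity: `φ` carries a unit potential flow of `H` to a unit flow of `G`. -/
theorem effRes_le_potential_energy {W : Type*} [Fintype W] [DecidableEq W] {H : SimpleGraph W}
    (hG : G.Connected) (φ : H →g G) (hφ : Function.Injective φ) (p : W → ℝ) {a b : W}
    (hdiv : ∀ z, ∑ w, (if H.Adj z w then p z - p w else 0) =
      (if z = a then 1 else 0) - (if z = b then 1 else 0)) :
    effRes G (φ a) (φ b) ≤ (1 / 2) * ∑ z, ∑ w, (if H.Adj z w then p z - p w else 0) ^ 2 := by
  set F : W → W → ℝ := fun z w ↦ if H.Adj z w then p z - p w else 0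
  set θ : V → V → ℝ := Function.extend φ (fun z ↦ Function.extend φ (F z) 0) 0
  have hθ : ∀ z w, θ (φ z) (φ w) = F z w := fun z w ↦ by simp only [θ, hφ.extend_apply]
  have hθ₁ : ∀ u v, u ∉ Set.range φ → θ u v = 0 := fun u v hu ↦ by
    simp [θ, Function.extend_apply' _ _ _ hu]
  have hθ₂ : ∀ u v, v ∉ Set.range φ → θ u v = 0 := fun u v hv ↦ by
    by_cases hu : u ∈ Set.range φ
    · obtain ⟨z, rfl⟩ := hu
      simp [θ, hφ.extend_apply, Function.extend_apply' _ _ _ hv]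
    · exact hθ₁ u v hu
  have hsum : ∀ f : V → ℝ, (∀ v ∉ Set.range φ, f v = 0) → ∑ v, f v = ∑ w, f (φ w) :=
    fun f hf ↦ (Fintype.sum_of_injective φ hφ _ f hf fun _ ↦ rfl).symm
  have hflow := G.effRes_le_flow_energy hG (x := φ a) (y := φ b) θ ?antisymm ?support ?divergence
  case antisymm =>
    intro u v
    by_cases hu : u ∈ Set.range φ
    · by_cases hv : v ∈ Set.range φ
      · obtain ⟨z, rfl⟩ := hu
        obtain ⟨w, rfl⟩ := hv
        simp only [hθ, F, H.adj_comm w z]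
        split_ifs <;> ring
      · simp [hθ₂ _ _ hv, hθ₁ _ _ hv]
    · simp [hθ₁ _ _ hu, hθ₂ _ _ hu]
  case support =>
    intro u v huv
    by_cases hu : u ∈ Set.range φ
    · by_cases hv : v ∈ Set.range φ
      · obtain ⟨z, rfl⟩ := hu
        obtain ⟨w, rfl⟩ := hv
        have : ¬H.Adj z w := fun h ↦ huv (φ.map_adj h)
        simp [hθ, F, this]
      · exact hθ₂ _ _ hv
    · exact hθ₁ _ _ hu
  case divergence =>
    intro u
    by_cases hu : u ∈ Set.range φ
    · obtain ⟨z, rfl⟩ := hu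
      simp only [hsum _ (hθ₂ _), hθ, F, hdiv, hφ.eq_iff]
    · have ha : u ≠ φ a := fun h ↦ hu ⟨a, h.symm⟩
      have hb : u ≠ φ b := fun h ↦ hu ⟨b, h.symm⟩
      simp [hθ₁ _ _ hu, ha, hb]
  have henergy : ∑ u, ∑ v, θ u v ^ 2 = ∑ z, ∑ w, F z w ^ 2 := by
    rw [hsum _ fun u hu ↦ by simp [fun v ↦ hθ₁ u v hu]]
    refine Finset.sum_congr rfl fun z _ ↦ ?_
    rw [hsum _ fun v hv ↦ by simp [hθ₂ _ v hv]]
    simp only [hθ]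
  rwa [henergy] at hflow

theorem effRes_le_one_of_adj (hG : G.Connected) {x y : V} (hxy : G.Adj x y) :
    effRes G x y ≤ 1 := by
  let φ : (⊤ : SimpleGraph (Fin 2)) →g G :=
    ⟨![x, y], fun {i j} hij ↦ by fin_cases i <;> fin_cases j <;> simp_all [hxy.symm]⟩
  have hφ : Function.Injective φ := by
    intro i j hij
    fin_cases i <;> fin_cases j <;> simp_all [φ, hxy.ne, hxy.ne.symm]
  have h := G.effRes_le_potential_energy hG φ hφ ![1, 0] (a := 0) (b := 1) (by
    intro z; fin_cases z <;> simp [Fin.sum_univ_two])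
  norm_num [φ, Fin.sum_univ_two] at h
  exact h

def pathGraphShift {n m : ℕ} (o : ℕ) (h : o + n ≤ m) : pathGraph n ↪g pathGraph m where
  toFun k := ⟨o + k, by omega⟩
  inj' i j hij := by simpa [Fin.ext_iff] using hij
  map_rel_iff' {i j} := by
    change (pathGraph m).Adj ⟨o + i, _⟩ ⟨o + j, _⟩ ↔ _
    simp only [pathGraph_adj]
    omega

def pathGraphReflect {n m : ℕ} (o : ℕ) (h : n ≤ o + 1) (ho : o < m) :
    pathGraph n ↪g pathGraph m where
  toFun k := ⟨o - k, by omega⟩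
  inj' i j hij := by simp only [Fin.mk.injEq] at hij; omega
  map_rel_iff' {i j} := by
    change (pathGraph m).Adj ⟨o - i, _⟩ ⟨o - j, _⟩ ↔ _
    simp only [pathGraph_adj]
    omega

@[simp]
theorem pathGraphShift_apply_val {n m o : ℕ} (h : o + n ≤ m) (k : Fin n) :
    (pathGraphShift o h k : ℕ) = o + k := rfl

@[simp]
theorem pathGraphReflect_apply_val {n m o : ℕ} (h : n ≤ o + 1) (ho : o < m) (k : Fin n) :
    (pathGraphReflect o h ho k : ℕ) = o - k := rfl

theorem exists_pathGraph_window {m : ℕ} (hm : 3 ≤ m) (i : Fin m) :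
    ∃ (f : pathGraph 3 ↪g pathGraph m) (k : Fin 3), f k = i ∧
      (pathGraph m).neighborSet i ⊆ Set.range f ∧ k ≠ 2 ∧
      ((i : ℕ) = 0 ∨ (i : ℕ) = m - 1 → k = 0) := by
  have hi := i.isLt
  by_cases h₀ : (i : ℕ) = 0
  · refine ⟨pathGraphShift 0 hm, 0, Fin.ext (by simp [h₀]), fun j hj ↦ ⟨1, ?_⟩, by decide,
      fun _ ↦ rfl⟩
    rw [mem_neighborSet, pathGraph_adj] at hj
    ext
    simp only [pathGraphShift_apply_val]
    omega
  by_cases h₁ : (i : ℕ) = m - 1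
  · refine ⟨pathGraphReflect (m - 1) (by omega) (by omega), 0, Fin.ext (by simp [h₁]),
      fun j hj ↦ ⟨1, ?_⟩, by decide, fun _ ↦ rfl⟩
    rw [mem_neighborSet, pathGraph_adj] at hj
    ext
    simp only [pathGraphReflect_apply_val]
    omega
  refine ⟨pathGraphShift (i - 1) (by omega), 1, Fin.ext (by simp; omega), fun j hj ↦ ?_, by decide,
    by omega⟩
  rw [mem_neighborSet, pathGraph_adj] at hj
  rcases hj with hj | hj
  · refine ⟨2, Fin.ext ?_⟩
    simp only [pathGraphShift_apply_val]
    omega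
  · refine ⟨0, Fin.ext ?_⟩
    simp only [pathGraphShift_apply_val]
    omega

section BoxProd


variable {α β γ δ : Type*} {G : SimpleGraph α} {G' : SimpleGraph β} {H : SimpleGraph γ}
  {H' : SimpleGraph δ}

def Embedding.boxProdMap (f : G ↪g G') (g : H ↪g H') : G.boxProd H ↪g G'.boxProd H' where
  toFun := Prod.map f g
  inj' := f.injective.prodMap g.injective
  map_rel_iff' {x y} := by simp [boxProd_adj, f.injective.eq_iff, g.injective.eq_iff]

theorem Embedding.neighborSet_subset_range_boxProdMap (f : G ↪g G') (g : H ↪g H') {a : α} {c : γ}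
    (hf : G'.neighborSet (f a) ⊆ Set.range f) (hg : H'.neighborSet (g c) ⊆ Set.range g) :
    (G'.boxProd H').neighborSet (f a, g c) ⊆ Set.range (Embedding.boxProdMap f g) := by
  rintro ⟨b, d⟩ (⟨hb, rfl⟩ | ⟨hd, rfl⟩)
  · obtain ⟨a', rfl⟩ := hf hb
    exact ⟨(a', c), rfl⟩
  · obtain ⟨c', rfl⟩ := hg hd
    exact ⟨(a, c'), rfl⟩

end BoxProd

end SimpleGraph

section Grid

open SimpleGraph

theorem grid_adj {m n : ℕ} {u v : Fin m × Fin n} :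
    (grid m n).Adj u v ↔
      (u.1.val + 1 = v.1.val ∨ v.1.val + 1 = u.1.val) ∧ u.2 = v.2 ∨
      (u.2.val + 1 = v.2.val ∨ v.2.val + 1 = u.2.val) ∧ u.1 = v.1 := by
  simp only [grid, boxProd_adj, pathGraph_adj]

theorem grid_connected {m n : ℕ} (hm : 0 < m) (hn : 0 < n) : (grid m n).Connected := by
  obtain ⟨m, rfl⟩ := Nat.exists_eq_add_of_lt hm
  obtain ⟨n, rfl⟩ := Nat.exists_eq_add_of_lt hn
  exact connected_boxProd.mpr
    ⟨pathGraph_connected _, pathGraph_connected _⟩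

theorem exists_grid_window {m n : ℕ} (hm : 3 ≤ m) (hn : 3 ≤ n) (v : Fin m × Fin n)
    (hv : v.1.val = 0 ∨ v.1.val = m - 1 ∨ v.2.val = 0 ∨ v.2.val = n - 1) :
    ∃ (φ : grid 3 3 ↪g grid m n) (c : Fin 3 × Fin 3), (c = (0, 0) ∨ c = (1, 0)) ∧ φ c = v ∧
      (grid m n).neighborSet v ⊆ Set.range φ := by
  obtain ⟨i, j⟩ := v
  obtain ⟨f, k, rfl, hf, hk₂, hk₀⟩ := exists_pathGraph_window hm i
  obtain ⟨g, l, rfl, hg, hl₂, hl₀⟩ := exists_pathGraph_window hn j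
  have hφ := Embedding.neighborSet_subset_range_boxProdMap f g hf hg
  have hk : k = 0 ∨ k = 1 := by fin_cases k <;> simp_all
  have hl : l = 0 ∨ l = 1 := by fin_cases l <;> simp_all
  rcases hl with rfl | rfl
  · exact ⟨Embedding.boxProdMap f g, (k, 0), by rcases hk with rfl | rfl <;> simp, rfl, hφ⟩
  · have hk : k = 0 := hk₀ (by simp_all)
    subst hk
    refine ⟨(Embedding.boxProdMap f g).comp (boxProdComm _ _).toEmbedding, (1, 0), by simp, rfl, ?_⟩
    intro y hy
    obtain ⟨⟨a, b⟩, rfl⟩ := hφ hy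
    exact ⟨(b, a), rfl⟩

variable {V : Type*} [Fintype V] [DecidableEq V] {G : SimpleGraph V}

/- The potentials below are the voltages of a unit current in the 3 × 3 grid from `(1, 0)` to
each of its neighbours; the three resistances add up to exactly `2`. -/

theorem effRes_window_le_left (hG : G.Connected) (φ : grid 3 3 →g G) (hφ : Function.Injective φ) :
    effRes G (φ (1, 0)) (φ (0, 0)) ≤ 17 / 24 := by
  have h := G.effRes_le_potential_energy hG φ hφ
    (fun z ↦ ![![0, 7/24, 3/8], ![17/24, 1/2, 11/24], ![5/8, 13/24, 1/2]] z.1 z.2)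
    (a := (1, 0)) (b := (0, 0)) (by
      intro z
      fin_cases z <;> simp [Fintype.sum_prod_type, Fin.sum_univ_three, grid_adj] <;> norm_num)
  refine h.trans_eq ?_
  simp [Fintype.sum_prod_type, Fin.sum_univ_three, grid_adj]
  norm_num

theorem effRes_window_le_right (hG : G.Connected) (φ : grid 3 3 →g G) (hφ : Function.Injective φ) :
    effRes G (φ (1, 0)) (φ (2, 0)) ≤ 17 / 24 := by
  have h := G.effRes_le_potential_energy hG φ hφ
    (fun z ↦ ![![5/8, 13/24, 1/2], ![17/24, 1/2, 11/24], ![0, 7/24, 3/8]] z.1 z.2)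
    (a := (1, 0)) (b := (2, 0)) (by
      intro z
      fin_cases z <;> simp [Fintype.sum_prod_type, Fin.sum_univ_three, grid_adj] <;> norm_num)
  refine h.trans_eq ?_
  simp [Fintype.sum_prod_type, Fin.sum_univ_three, grid_adj]
  norm_num

theorem effRes_window_le_up (hG : G.Connected) (φ : grid 3 3 →g G) (hφ : Function.Injective φ) :
    effRes G (φ (1, 0)) (φ (1, 1)) ≤ 7 / 12 := by
  have h := G.effRes_le_potential_energy hG φ hφ
    (fun z ↦ ![![3/8, 1/6, 1/8], ![7/12, 0, 1/12], ![3/8, 1/6, 1/8]] z.1 z.2)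
    (a := (1, 0)) (b := (1, 1)) (by
      intro z
      fin_cases z <;> simp [Fintype.sum_prod_type, Fin.sum_univ_three, grid_adj] <;> norm_num)
  refine h.trans_eq ?_
  simp [Fintype.sum_prod_type, Fin.sum_univ_three, grid_adj]
  norm_num

theorem sum_adj_effRes_le_two_of_window (hG : G.Connected) (φ : grid 3 3 ↪g G)
    {c : Fin 3 × Fin 3} (hc : c = (0, 0) ∨ c = (1, 0)) (hN : G.neighborSet (φ c) ⊆ Set.range φ) :
    ∑ y, (if G.Adj (φ c) y then effRes G (φ c) y else 0) ≤ 2 := by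
  rw [← Fintype.sum_of_injective φ φ.injective
    (fun z ↦ if (grid 3 3).Adj c z then effRes G (φ c) (φ z) else 0)
    (fun y ↦ if G.Adj (φ c) y then effRes G (φ c) y else 0)
    (fun y hy ↦ if_neg fun h ↦ hy (hN h)) (fun z ↦ by simp only [φ.map_adj_iff])]
  rcases hc with rfl | rfl
  · have h₁ := G.effRes_le_one_of_adj hG (φ.map_adj_iff.mpr (grid_adj.mpr (by decide)) :
      G.Adj (φ (0, 0)) (φ (1, 0)))
    have h₂ := G.effRes_le_one_of_adj hG (φ.map_adj_iff.mpr (grid_adj.mpr (by decide)) :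
      G.Adj (φ (0, 0)) (φ (0, 1)))
    simp [Fintype.sum_prod_type, Fin.sum_univ_three, grid_adj]
    linarith
  · have h₁ := effRes_window_le_left hG φ.toHom φ.injective
    have h₂ := effRes_window_le_right hG φ.toHom φ.injective
    have h₃ := effRes_window_le_up hG φ.toHom φ.injective
    simp only [Embedding.coe_toHom] at h₁ h₂ h₃
    simp [Fintype.sum_prod_type, Fin.sum_univ_three, grid_adj]
    linarith

end Grid

theorem grid_boundary_curv_nonneg (m n : ℕ) (hm : 3 ≤ m) (hn : 3 ≤ n)
    (v : Fin m × Fin n)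
    (hb : v.1.val = 0 ∨ v.1.val = m - 1 ∨ v.2.val = 0 ∨ v.2.val = n - 1) :
    0 ≤ curv (grid m n) v := by
  obtain ⟨φ, c, hc, rfl, hN⟩ := exists_grid_window hm hn v hb
  have hsum := sum_adj_effRes_le_two_of_window (grid_connected (by omega) (by omega)) φ hc hN
  rw [curv]
  linarith
end
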